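/- Fix integers T ≥ 1 and n ≥ 1, matrices A_t ∈ ℝ^{n×n} and symmetric positive definite W_t (t = 0,…,T−1), a symmetric positive definite P_0, symmetric positive semidefinite Θ_t and reals D_t > 0 (t = 1,…,T), and reals α_t ≥ 0 (t = 1,…,T). Then the infimum of Σ_{t=1}^{T} [½ log det(A_{t−1} P_{t−1} A_{t−1}ᵀ + W_{t−1}) − ½ log det P_t + (α_t/2) Tr(Θ_t P_t)] over T-tuples of symmetric matrices with 0 ≺ P_t ⪯ A_{t−1} P_{t−1} A_{t−1}ᵀ + W_{t−1} for all t = 1,…,T equals the infimum of Σ_{t=1}^{T} [(α_t/2) Tr(Θ_t P_t) − ½ log det Π_t] + c over the soft max-det feasible set F₀. -/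

import Mathlib

/-! For `P ≻ 0` and `W ≻ 0`, a Schur complement turns the block constraint on `Π_t` into
`Π_t ⪯ P_t - P_t A_tᵀ (W_t + A_t P_t A_tᵀ)⁻¹ A_t P_t`, and the determinant of the
right-hand side is `det P_t det W_t / det (A_t P_t A_tᵀ + W_t)`. As `det` is monotone in the
Loewner order, for fixed `P` the best `Π` takes this value for `t < T` (and `Π_T = P_T`), and
with that choice the max-det objective telescopes to the nested one. Every `P` occurring in
`F₀` is feasible for the nested problem, so each value of one problem is dominated by a value
of the other. -/

open Matrix

/-- The soft nested feasible set: sequences `P` with `P 0 = P₀` and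
`0 ≺ P t ⪯ A (t−1) * P (t−1) * (A (t−1))ᵀ + W (t−1)` for `t = 1, …, T`. -/
def softNestedFeasible (n T : ℕ) (A W : ℕ → Matrix (Fin n) (Fin n) ℝ)
    (P₀ : Matrix (Fin n) (Fin n) ℝ) :
    Set (ℕ → Matrix (Fin n) (Fin n) ℝ) :=
  {P | P 0 = P₀ ∧ ∀ t, 1 ≤ t → t ≤ T →
    (P t).PosDef ∧
    (A (t - 1) * P (t - 1) * (A (t - 1))ᵀ + W (t - 1) - P t).PosSemidef}

/-- The soft nested objective
`Σ_{t=1}^{T} [½ log det (A (t−1) P (t−1) (A (t−1))ᵀ + W (t−1)) − ½ log det (P t)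
  + (α t / 2) Tr(Θ t * P t)]`. -/
noncomputable def softNestedObj (n T : ℕ) (A W Θ : ℕ → Matrix (Fin n) (Fin n) ℝ)
    (α : ℕ → ℝ) (P : ℕ → Matrix (Fin n) (Fin n) ℝ) : ℝ :=
  ∑ t ∈ Finset.Icc 1 T,
    ((1 / 2) * Real.log (A (t - 1) * P (t - 1) * (A (t - 1))ᵀ + W (t - 1)).det -
      (1 / 2) * Real.log (P t).det + (α t / 2) * (Θ t * P t).trace)

/-- The soft max-det feasible set `F₀`: like `F` but without the trace constraints. -/
def softMaxdetFeasible (n T : ℕ) (A W : ℕ → Matrix (Fin n) (Fin n) ℝ)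
    (P₀ : Matrix (Fin n) (Fin n) ℝ) :
    Set ((ℕ → Matrix (Fin n) (Fin n) ℝ) × (ℕ → Matrix (Fin n) (Fin n) ℝ)) :=
  {PQ | PQ.1 0 = P₀ ∧
    (∀ t, 1 ≤ t → t ≤ T → (PQ.2 t).PosDef) ∧
    (∀ t, t < T → (A t * PQ.1 t * (A t)ᵀ + W t - PQ.1 (t + 1)).PosSemidef) ∧
    (∀ t, 1 ≤ t → t < T →
      (fromBlocks (PQ.1 t - PQ.2 t) (PQ.1 t * (A t)ᵀ) (A t * PQ.1 t)
        (W t + A t * PQ.1 t * (A t)ᵀ)).PosSemidef) ∧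
    PQ.1 T = PQ.2 T}

/-- The constant `c = ½ log det (A 0 P₀ (A 0)ᵀ + W 0) + Σ_{t=1}^{T−1} ½ log det (W t)`. -/
noncomputable def maxdetConst (n T : ℕ) (A W : ℕ → Matrix (Fin n) (Fin n) ℝ)
    (P₀ : Matrix (Fin n) (Fin n) ℝ) : ℝ :=
  (1 / 2) * Real.log (A 0 * P₀ * (A 0)ᵀ + W 0).det +
    ∑ t ∈ Finset.Ico 1 T, (1 / 2) * Real.log (W t).det

/-- The soft max-det objective
`Σ_{t=1}^{T} [(α t / 2) Tr(Θ t * P t) − ½ log det (Π t)] + c`. -/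
noncomputable def softMaxdetObj (n T : ℕ) (A W Θ : ℕ → Matrix (Fin n) (Fin n) ℝ)
    (P₀ : Matrix (Fin n) (Fin n) ℝ) (α : ℕ → ℝ)
    (PQ : (ℕ → Matrix (Fin n) (Fin n) ℝ) × (ℕ → Matrix (Fin n) (Fin n) ℝ)) : ℝ :=
  ∑ t ∈ Finset.Icc 1 T,
    ((α t / 2) * (Θ t * PQ.1 t).trace - (1 / 2) * Real.log (PQ.2 t).det) +
    maxdetConst n T A W P₀

open scoped MatrixOrder

namespace Matrix

variable {m : Type*} [Fintype m] [DecidableEq m]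

theorem PosSemidef.det_le_one {Z : Matrix m m ℝ} (hZ : Z.PosSemidef) (h : Z ≤ 1) :
    Z.det ≤ 1 := by
  have hspec := (CFC.le_one_iff (R := ℝ) Z hZ.1.isSelfAdjoint).mp h
  rw [hZ.1.det_eq_prod_eigenvalues]
  exact_mod_cast Finset.prod_le_one (fun i _ => hZ.eigenvalues_nonneg i)
    fun i _ => hspec _ (hZ.1.eigenvalues_mem_spectrum_real i)

theorem PosSemidef.det_le_det {X Y : Matrix m m ℝ} (hX : X.PosSemidef) (hY : Y.PosDef)
    (h : X ≤ Y) : X.det ≤ Y.det := by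
  obtain ⟨B, rfl⟩ := CStarAlgebra.nonneg_iff_eq_star_mul_self.mp hY.posSemidef.nonneg
  have hB : IsUnit B.det := by
    simpa [star_eq_conjTranspose] using hY.det_pos.ne'
  have hC : star B⁻¹ * (star B * B) * B⁻¹ = 1 := by
    rw [show star B⁻¹ * (star B * B) * B⁻¹ = star (B * B⁻¹) * (B * B⁻¹) by
      simp only [star_mul, mul_assoc], mul_nonsing_inv B hB, star_one, one_mul]
  have hZ : (star B⁻¹ * X * B⁻¹).det ≤ 1 := by
    refine PosSemidef.det_le_one ?_ (hC ▸ star_left_conjugate_le_conjugate h B⁻¹)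
    simpa [star_eq_conjTranspose] using hX.conjTranspose_mul_mul_same B⁻¹
  simp only [det_mul, star_eq_conjTranspose, det_conjTranspose, star_trivial, det_nonsing_inv,
    Ring.inverse_eq_inv] at hZ ⊢
  have hb : B.det ≠ 0 := hB.ne_zero
  calc X.det = B.det * B.det * (B.det⁻¹ * X.det * B.det⁻¹) := by field_simp
    _ ≤ B.det * B.det := mul_le_of_le_one_right (mul_self_nonneg _) hZ

end Matrix

section OptimalPi

variable {m k : Type*} [Fintype m] [Fintype k]
  {A : Matrix k m ℝ} {P Q : Matrix m m ℝ} {W : Matrix k k ℝ}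

theorem Matrix.PosDef.add_mul_mul_transpose (hP : P.PosDef) (hW : W.PosDef) :
    (W + A * P * Aᵀ).PosDef := by
  simpa [conjTranspose_eq_transpose_of_trivial] using
    hW.add_posSemidef (hP.posSemidef.mul_mul_conjTranspose_same A)

variable [DecidableEq k]

/-- `Cov(x | A x + w)` for independent `x ∼ N(0, P)` and `w ∼ N(0, W)`. -/
noncomputable def optimalPi (A : Matrix k m ℝ) (P : Matrix m m ℝ) (W : Matrix k k ℝ) :
    Matrix m m ℝ :=
  P - P * Aᵀ * (W + A * P * Aᵀ)⁻¹ * (A * P)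

theorem fromBlocks_posSemidef_iff_le_optimalPi (hP : P.PosDef) (hW : W.PosDef) :
    (fromBlocks (P - Q) (P * Aᵀ) (A * P) (W + A * P * Aᵀ)).PosSemidef ↔
      Q ≤ optimalPi A P W := by
  have hS := PosDef.add_mul_mul_transpose (A := A) hP hW
  have : Invertible (W + A * P * Aᵀ) := hS.isUnit.invertible
  have hschur := PosDef.fromBlocks₂₂ (P - Q) (P * Aᵀ) hS
  have hB : (P * Aᵀ)ᴴ = A * P := by
    simpa [conjTranspose_eq_transpose_of_trivial] using congrArg (A * ·) hP.1.eq
  rw [hB] at hschur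
  rw [hschur, le_iff, optimalPi, sub_right_comm]

variable [DecidableEq m]

theorem optimalPi_eq_inv (hP : P.PosDef) (hW : W.PosDef) :
    optimalPi A P W = (P⁻¹ + Aᵀ * W⁻¹ * A)⁻¹ := by
  have : Invertible P := hP.isUnit.invertible
  have : Invertible W := hW.isUnit.invertible
  rw [add_mul_mul_inv_eq_sub _ _ _ _ hP.inv.isUnit hW.inv.isUnit] <;>
    simp only [inv_inv_of_invertible]
  · simp only [optimalPi, ← Matrix.mul_assoc]
  · exact (PosDef.add_mul_mul_transpose hP hW).isUnit

theorem Matrix.PosDef.optimalPi (hP : P.PosDef) (hW : W.PosDef) :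
    (optimalPi A P W).PosDef := by
  rw [optimalPi_eq_inv hP hW]
  refine (hP.inv.add_posSemidef ?_).inv
  simpa [conjTranspose_eq_transpose_of_trivial] using
    hW.inv.posSemidef.conjTranspose_mul_mul_same A

theorem det_mul_det_optimalPi (hP : P.PosDef) (hW : W.PosDef) :
    (A * P * Aᵀ + W).det * (optimalPi A P W).det = P.det * W.det := by
  have hS := PosDef.add_mul_mul_transpose (A := A) hP hW
  have : Invertible (W + A * P * Aᵀ) := hS.isUnit.invertible
  have : Invertible P := hP.isUnit.invertible
  have h₁ := det_fromBlocks₂₂ P (P * Aᵀ) (A * P) (W + A * P * Aᵀ)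
  have h₂ := det_fromBlocks₁₁ P (P * Aᵀ) (A * P) (W + A * P * Aᵀ)
  have hschur : W + A * P * Aᵀ - A * P * P⁻¹ * (P * Aᵀ) = W := by
    rw [mul_nonsing_inv_cancel_right _ _ hP.det_pos.ne'.isUnit, ← Matrix.mul_assoc,
      add_sub_cancel_right]
  simp only [invOf_eq_nonsing_inv] at h₁ h₂
  rw [add_comm, optimalPi, ← h₁, h₂, hschur]

theorem log_det_optimalPi (hP : P.PosDef) (hW : W.PosDef) :
    Real.log (optimalPi A P W).det =
      Real.log P.det + Real.log W.det - Real.log (A * P * Aᵀ + W).det := by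
  have hS : (A * P * Aᵀ + W).PosDef := add_comm W _ ▸ PosDef.add_mul_mul_transpose hP hW
  have h := congrArg Real.log (det_mul_det_optimalPi (A := A) hP hW)
  rw [Real.log_mul hS.det_pos.ne' (hP.optimalPi hW).det_pos.ne',
    Real.log_mul hP.det_pos.ne' hW.det_pos.ne'] at h
  linarith

end OptimalPi

theorem Finset.sum_Icc_one_sub_one {M : Type*} [AddCommMonoid M] (f : ℕ → M) (T : ℕ) :
    ∑ t ∈ Finset.Icc 1 T, f (t - 1) = ∑ t ∈ Finset.range T, f t := by
  induction T with
  | zero => rfl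
  | succ T ih =>
    rw [Finset.sum_Icc_succ_top (by omega), ih, Finset.sum_range_succ, Nat.add_sub_cancel]

section SoftMaxdet

variable {n T : ℕ} {A W Θ : ℕ → Matrix (Fin n) (Fin n) ℝ} {P₀ : Matrix (Fin n) (Fin n) ℝ}
  {α : ℕ → ℝ}

noncomputable def canonicalPi (T : ℕ) (A W P : ℕ → Matrix (Fin n) (Fin n) ℝ) :
    ℕ → Matrix (Fin n) (Fin n) ℝ :=
  fun t => if t < T then optimalPi (A t) (P t) (W t) else P t

theorem canonicalPi_of_lt {P : ℕ → Matrix (Fin n) (Fin n) ℝ} {t : ℕ} (ht : t < T) :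
    canonicalPi T A W P t = optimalPi (A t) (P t) (W t) :=
  if_pos ht

theorem canonicalPi_self (P : ℕ → Matrix (Fin n) (Fin n) ℝ) : canonicalPi T A W P T = P T :=
  if_neg (lt_irrefl T)

theorem canonicalPi_mem_softMaxdetFeasible {P : ℕ → Matrix (Fin n) (Fin n) ℝ}
    (hW : ∀ t, t < T → (W t).PosDef) (hP : P ∈ softNestedFeasible n T A W P₀) :
    (P, canonicalPi T A W P) ∈ softMaxdetFeasible n T A W P₀ := by
  obtain ⟨h0, hP⟩ := hP
  refine ⟨h0, fun t h1 h2 => ?_, fun t ht => ?_, fun t h1 h2 => ?_, (canonicalPi_self P).symm⟩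
  · dsimp only
    rcases h2.lt_or_eq with ht | rfl
    · rw [canonicalPi_of_lt ht]
      exact (hP t h1 h2).1.optimalPi (hW t ht)
    · rw [canonicalPi_self]
      exact (hP t h1 h2).1
  · simpa using (hP (t + 1) (by omega) (by omega)).2
  · dsimp only
    rw [canonicalPi_of_lt h2]
    exact (fromBlocks_posSemidef_iff_le_optimalPi (hP t h1 h2.le).1 (hW t h2)).mpr le_rfl

theorem softMaxdetObj_canonicalPi {P : ℕ → Matrix (Fin n) (Fin n) ℝ} (hT : 1 ≤ T)
    (hW : ∀ t, t < T → (W t).PosDef) (hP : P ∈ softNestedFeasible n T A W P₀) :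
    softMaxdetObj n T A W Θ P₀ α (P, canonicalPi T A W P) = softNestedObj n T A W Θ α P := by
  obtain ⟨rfl, hP⟩ := hP
  have hshift : ∑ t ∈ Finset.Icc 1 T,
      (1 / 2) * Real.log (A (t - 1) * P (t - 1) * (A (t - 1))ᵀ + W (t - 1)).det =
      (1 / 2) * Real.log (A 0 * P 0 * (A 0)ᵀ + W 0).det +
        ∑ t ∈ Finset.Ico 1 T, (1 / 2) * Real.log (A t * P t * (A t)ᵀ + W t).det := by
    rw [Finset.sum_Icc_one_sub_one (fun s => (1 / 2) * Real.log (A s * P s * (A s)ᵀ + W s).det),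
      Finset.sum_range_eq_add_Ico _ hT]
  have hPi : ∑ t ∈ Finset.Icc 1 T, (1 / 2) * Real.log (canonicalPi T A W P t).det =
      ∑ t ∈ Finset.Icc 1 T, (1 / 2) * Real.log (P t).det +
        ∑ t ∈ Finset.Ico 1 T, ((1 / 2) * Real.log (W t).det -
          (1 / 2) * Real.log (A t * P t * (A t)ᵀ + W t).det) := by
    rw [← Finset.Ico_insert_right hT, Finset.sum_insert Finset.right_notMem_Ico,
      Finset.sum_insert Finset.right_notMem_Ico, canonicalPi_self,
      add_assoc, ← Finset.sum_add_distrib]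
    congr 1
    refine Finset.sum_congr rfl fun t ht => ?_
    obtain ⟨h1, h2⟩ := Finset.mem_Ico.mp ht
    rw [canonicalPi_of_lt h2, log_det_optimalPi (hP t h1 h2.le).1 (hW t h2)]
    ring
  simp only [softMaxdetObj, softNestedObj, maxdetConst, Finset.sum_add_distrib,
    Finset.sum_sub_distrib] at hshift hPi ⊢
  linarith

theorem fst_mem_softNestedFeasible
    {PQ : (ℕ → Matrix (Fin n) (Fin n) ℝ) × (ℕ → Matrix (Fin n) (Fin n) ℝ)}
    (hPQ : PQ ∈ softMaxdetFeasible n T A W P₀) : PQ.1 ∈ softNestedFeasible n T A W P₀ := by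
  obtain ⟨P, Q⟩ := PQ
  obtain ⟨h0, hQ, hdyn, hblk, hPT⟩ := hPQ
  refine ⟨h0, fun t h1 h2 => ⟨?_, ?_⟩⟩
  · rcases h2.lt_or_eq with ht | rfl
    · have hsub : (P t - Q t).PosSemidef := (hblk t h1 ht).submatrix Sum.inl
      simpa using PosDef.posSemidef_add hsub (hQ t h1 h2)
    · exact hPT ▸ hQ t h1 le_rfl
  · obtain ⟨s, rfl⟩ : ∃ s, t = s + 1 := ⟨t - 1, by omega⟩
    simpa using hdyn s (by omega)

theorem softMaxdetObj_canonicalPi_le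
    {PQ : (ℕ → Matrix (Fin n) (Fin n) ℝ) × (ℕ → Matrix (Fin n) (Fin n) ℝ)}
    (hW : ∀ t, t < T → (W t).PosDef) (hPQ : PQ ∈ softMaxdetFeasible n T A W P₀) :
    softMaxdetObj n T A W Θ P₀ α (PQ.1, canonicalPi T A W PQ.1) ≤
      softMaxdetObj n T A W Θ P₀ α PQ := by
  have hP := (fst_mem_softNestedFeasible hPQ).2
  obtain ⟨P, Q⟩ := PQ
  obtain ⟨-, hQ, -, hblk, hPT⟩ := hPQ
  simp only [softMaxdetObj]
  gcongr with t ht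
  all_goals obtain ⟨h1, h2⟩ := Finset.mem_Icc.mp ht
  · exact (hQ t h1 h2).det_pos
  rcases h2.lt_or_eq with hlt | rfl
  · have hPt := (hP t h1 h2).1
    rw [canonicalPi_of_lt hlt]
    exact (hQ t h1 h2).posSemidef.det_le_det (hPt.optimalPi (hW t hlt))
      ((fromBlocks_posSemidef_iff_le_optimalPi hPt (hW t hlt)).mp (hblk t h1 hlt))
  · rw [canonicalPi_self]
    exact (congrArg det hPT).ge

end SoftMaxdet

theorem soft_nested_eq_soft_maxdet_general (n T : ℕ) (hT : 1 ≤ T)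
    (A W Θ : ℕ → Matrix (Fin n) (Fin n) ℝ) (P₀ : Matrix (Fin n) (Fin n) ℝ)
    (α : ℕ → ℝ)
    (hW : ∀ t, t < T → (W t).PosDef) :
    sInf (softNestedObj n T A W Θ α '' softNestedFeasible n T A W P₀) =
      sInf (softMaxdetObj n T A W Θ P₀ α '' softMaxdetFeasible n T A W P₀) := by
  refine csInf_eq_csInf_of_forall_exists_le ?_ ?_
  · rintro _ ⟨P, hP, rfl⟩
    exact ⟨_, ⟨_, canonicalPi_mem_softMaxdetFeasible hW hP, rfl⟩,
      (softMaxdetObj_canonicalPi hT hW hP).le⟩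
  · rintro _ ⟨PQ, hPQ, rfl⟩
    have hP := fst_mem_softNestedFeasible hPQ
    exact ⟨_, ⟨_, hP, rfl⟩,
      (softMaxdetObj_canonicalPi hT hW hP).symm.le.trans (softMaxdetObj_canonicalPi_le hW hPQ)⟩

/-- The infimum of the soft-constrained nested objective over the soft
nested feasible set equals the infimum of the soft max-det objective over the soft
max-det feasible set `F₀`. -/
theorem soft_nested_eq_soft_maxdet (n T : ℕ) (hn : 0 < n) (hT : 1 ≤ T)
    (A W Θ : ℕ → Matrix (Fin n) (Fin n) ℝ) (P₀ : Matrix (Fin n) (Fin n) ℝ)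
    (D : ℕ → ℝ) (α : ℕ → ℝ)
    (hW : ∀ t, t < T → (W t).PosDef) (hP₀ : P₀.PosDef)
    (hΘ : ∀ t, 1 ≤ t → t ≤ T → (Θ t).PosSemidef)
    (hD : ∀ t, 1 ≤ t → t ≤ T → 0 < D t)
    (hα : ∀ t, 1 ≤ t → t ≤ T → 0 ≤ α t) :
    sInf (softNestedObj n T A W Θ α '' softNestedFeasible n T A W P₀) =
      sInf (softMaxdetObj n T A W Θ P₀ α '' softMaxdetFeasible n T A W P₀) :=
  soft_nested_eq_soft_maxdet_general n T hT A W Θ P₀ α hW
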